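/- Let η, m, ε, n be positive integers. Let ω₃ be the smallest singular value (the 2ηmεn-th largest singular value) of the 2ηmεn × ((η+1)mεn + ηm(ε+1)n) block matrix [[E_η⊗I_{mεn}, I_{ηm}⊗E_ε⊗I_n],[F_η⊗I_{mεn}, I_{ηm}⊗F_ε⊗I_n]]. Then ω₃ ≥ 2√2/(ε+η). (In fact ω₃ = 2·sin(π/(4·min(ε,η)+2)) if ε ≠ η and ω₃ = 2·sin(π/(4η)) if ε = η.) -/

import Mathlib

open Matrix
open scoped Kronecker

noncomputable section

/-- The `k × (k+1)` matrix `E_k = [I_k 0]`. -/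
def Ek (𝕜 : Type*) [RCLike 𝕜] (k : ℕ) : Matrix (Fin k) (Fin (k+1)) 𝕜 :=
  Matrix.of fun i j => if (j : ℕ) = (i : ℕ) then 1 else 0

/-- The `k × (k+1)` matrix `F_k = [0 I_k]`. -/
def Fk (𝕜 : Type*) [RCLike 𝕜] (k : ℕ) : Matrix (Fin k) (Fin (k+1)) 𝕜 :=
  Matrix.of fun i j => if (j : ℕ) = (i : ℕ) + 1 then 1 else 0

/-- The standard unit vector `(0, …, 0, 1)ᵀ` of size `k+1`. -/
def evec (𝕜 : Type*) [RCLike 𝕜] (k : ℕ) : Fin (k+1) → 𝕜 :=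
  fun i => if (i : ℕ) = k then 1 else 0

variable {𝕜 : Type*} [RCLike 𝕜]

/-- Frobenius norm of a matrix. -/
def frobNorm {p q : Type*} [Fintype p] [Fintype q] (M : Matrix p q 𝕜) : ℝ :=
  Real.sqrt (∑ i, ∑ j, ‖M i j‖ ^ 2)

/-- Spectral norm (largest singular value) of a matrix. -/
def specNorm {p q : Type*} [Fintype p] [Fintype q] [DecidableEq p] (M : Matrix p q 𝕜) : ℝ :=
  Real.sqrt (⨆ i, (Matrix.isHermitian_mul_conjTranspose_self M).eigenvalues i)

/-- Smallest singular value of a `p × q` matrix with `p ≤ q`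
(the `p`-th largest singular value). -/
def sigmaMin {p q : Type*} [Fintype p] [Fintype q] [DecidableEq p] (M : Matrix p q 𝕜) : ℝ :=
  Real.sqrt (⨅ i, (Matrix.isHermitian_mul_conjTranspose_self M).eigenvalues i)

/-- Euclidean norm of a vector. -/
def vecNorm {q : Type*} [Fintype q] (x : q → 𝕜) : ℝ :=
  Real.sqrt (∑ i, ‖x i‖ ^ 2)

/-- Frobenius norm of the pencil `P.1 - λ • P.2`. -/
def pFrob {p q : Type*} [Fintype p] [Fintype q] (P : Matrix p q 𝕜 × Matrix p q 𝕜) : ℝ :=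
  Real.sqrt (frobNorm P.1 ^ 2 + frobNorm P.2 ^ 2)

/-- Spectral norm of the pencil `P.1 - λ • P.2`. -/
def pSpec {p q : Type*} [Fintype p] [Fintype q] [DecidableEq p]
    (P : Matrix p q 𝕜 × Matrix p q 𝕜) : ℝ :=
  Real.sqrt (specNorm P.1 ^ 2 + specNorm P.2 ^ 2)

/-- A 3×3 block matrix. -/
def blocks3 {R1 R2 R3 C1 C2 C3 : Type*}
    (M11 : Matrix R1 C1 𝕜) (M12 : Matrix R1 C2 𝕜) (M13 : Matrix R1 C3 𝕜)
    (M21 : Matrix R2 C1 𝕜) (M22 : Matrix R2 C2 𝕜) (M23 : Matrix R2 C3 𝕜)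
    (M31 : Matrix R3 C1 𝕜) (M32 : Matrix R3 C2 𝕜) (M33 : Matrix R3 C3 𝕜) :
    Matrix (R1 ⊕ (R2 ⊕ R3)) (C1 ⊕ (C2 ⊕ C3)) 𝕜 :=
  Matrix.fromBlocks M11 (Matrix.fromCols M12 M13) (Matrix.fromRows M21 M31)
    (Matrix.fromBlocks M22 M23 M32 M33)

/-- `K̂₂ᵀ C = (e_{η+1} ⊗ I_m) C`. -/
def colUnit {m ℓ : ℕ} (η : ℕ) (C : Matrix (Fin m) (Fin ℓ) 𝕜) :
    Matrix (Fin (η+1) × Fin m) (Fin ℓ) 𝕜 :=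
  Matrix.of fun i j => evec 𝕜 η i.1 * C i.2 j

/-- `B K̂₁ = B (e_{ε+1}ᵀ ⊗ I_n)`. -/
def rowUnit {n ℓ : ℕ} (ε : ℕ) (B : Matrix (Fin ℓ) (Fin n) 𝕜) :
    Matrix (Fin ℓ) (Fin (ε+1) × Fin n) 𝕜 :=
  Matrix.of fun i j => evec 𝕜 ε j.1 * B i j.2

/-- Row index type of a block Kronecker pencil. -/
abbrev SRow (m ℓ ε η n : ℕ) := (Fin (η+1) × Fin m) ⊕ (Fin ℓ ⊕ (Fin ε × Fin n))

/-- Column index type of a block Kronecker pencil. -/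
abbrev SCol (m ℓ ε η n : ℕ) := (Fin (ε+1) × Fin n) ⊕ (Fin ℓ ⊕ (Fin η × Fin m))

/-- The block Kronecker pencil
`S(λ) = [[M(λ), K̂₂ᵀC, K₂ᵀ(λ)], [BK̂₁, A-λI, 0], [K₁(λ), 0, 0]]`
represented as a pair `(Sa, Sb)` with `S(λ) = Sa - λ Sb`. -/
def blockKron (m n ℓ ε η : ℕ) (A : Matrix (Fin ℓ) (Fin ℓ) 𝕜) (B : Matrix (Fin ℓ) (Fin n) 𝕜)
    (C : Matrix (Fin m) (Fin ℓ) 𝕜)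
    (M : Matrix (Fin (η+1) × Fin m) (Fin (ε+1) × Fin n) 𝕜 ×
         Matrix (Fin (η+1) × Fin m) (Fin (ε+1) × Fin n) 𝕜) :
    Matrix (SRow m ℓ ε η n) (SCol m ℓ ε η n) 𝕜 × Matrix (SRow m ℓ ε η n) (SCol m ℓ ε η n) 𝕜 :=
  (blocks3 M.1 (colUnit η C) ((Ek 𝕜 η)ᵀ ⊗ₖ (1 : Matrix (Fin m) (Fin m) 𝕜))
      (rowUnit ε B) A 0
      (Ek 𝕜 ε ⊗ₖ (1 : Matrix (Fin n) (Fin n) 𝕜)) 0 0,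
   blocks3 M.2 0 ((Fk 𝕜 η)ᵀ ⊗ₖ (1 : Matrix (Fin m) (Fin m) 𝕜))
      0 1 0
      (Fk 𝕜 ε ⊗ₖ (1 : Matrix (Fin n) (Fin n) 𝕜)) 0 0)

/-- Row index type of the matrix `T`. -/
abbrev TRow (m ℓ ε η n : ℕ) :=
  (((Fin η × Fin m) × Fin ℓ) ⊕ ((Fin η × Fin m) × Fin ℓ)) ⊕
  (((Fin ℓ × (Fin ε × Fin n)) ⊕ (Fin ℓ × (Fin ε × Fin n))) ⊕
   (((Fin η × Fin m) × (Fin ε × Fin n)) ⊕ ((Fin η × Fin m) × (Fin ε × Fin n))))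

/-- Column index type of the matrix `T`. -/
abbrev TCol (m ℓ ε η n : ℕ) :=
  (((Fin (η+1) × Fin m) × Fin ℓ) ⊕ ((Fin η × Fin m) × Fin ℓ)) ⊕
  (((Fin ℓ × (Fin ε × Fin n)) ⊕ (Fin ℓ × (Fin (ε+1) × Fin n))) ⊕
   (((Fin (η+1) × Fin m) × (Fin ε × Fin n)) ⊕ ((Fin η × Fin m) × (Fin (ε+1) × Fin n))))

/-- The 6×6 block matrix `T`. -/
def Tmat (m n ℓ ε η : ℕ) (A : Matrix (Fin ℓ) (Fin ℓ) 𝕜) (B : Matrix (Fin ℓ) (Fin n) 𝕜)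
    (C : Matrix (Fin m) (Fin ℓ) 𝕜) : Matrix (TRow m ℓ ε η n) (TCol m ℓ ε η n) 𝕜 :=
  Matrix.fromRows
    (Matrix.fromCols
      (Matrix.fromBlocks
        ((Ek 𝕜 η ⊗ₖ (1 : Matrix (Fin m) (Fin m) 𝕜)) ⊗ₖ (1 : Matrix (Fin ℓ) (Fin ℓ) 𝕜))
        ((1 : Matrix (Fin η × Fin m) (Fin η × Fin m) 𝕜) ⊗ₖ A)
        ((Fk 𝕜 η ⊗ₖ (1 : Matrix (Fin m) (Fin m) 𝕜)) ⊗ₖ (1 : Matrix (Fin ℓ) (Fin ℓ) 𝕜))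
        ((1 : Matrix (Fin η × Fin m) (Fin η × Fin m) 𝕜) ⊗ₖ (1 : Matrix (Fin ℓ) (Fin ℓ) 𝕜)))
      (Matrix.fromCols 0
        (Matrix.fromBlocks 0
          ((1 : Matrix (Fin η × Fin m) (Fin η × Fin m) 𝕜) ⊗ₖ (rowUnit ε B))
          0 0)))
    (Matrix.fromRows
      (Matrix.fromCols 0
        (Matrix.fromCols
          (Matrix.fromBlocks
            (Aᵀ ⊗ₖ (1 : Matrix (Fin ε × Fin n) (Fin ε × Fin n) 𝕜))
            ((1 : Matrix (Fin ℓ) (Fin ℓ) 𝕜) ⊗ₖ (Ek 𝕜 ε ⊗ₖ (1 : Matrix (Fin n) (Fin n) 𝕜)))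
            ((1 : Matrix (Fin ℓ) (Fin ℓ) 𝕜) ⊗ₖ (1 : Matrix (Fin ε × Fin n) (Fin ε × Fin n) 𝕜))
            ((1 : Matrix (Fin ℓ) (Fin ℓ) 𝕜) ⊗ₖ (Fk 𝕜 ε ⊗ₖ (1 : Matrix (Fin n) (Fin n) 𝕜))))
          (Matrix.fromBlocks
            (Matrix.of fun (i : Fin ℓ × (Fin ε × Fin n))
                (j : (Fin (η+1) × Fin m) × (Fin ε × Fin n)) =>
              evec 𝕜 η j.1.1 * C j.1.2 i.1 * (if i.2 = j.2 then 1 else 0))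
            0 0 0)))
      (Matrix.fromCols 0
        (Matrix.fromCols 0
          (Matrix.fromBlocks
            ((Ek 𝕜 η ⊗ₖ (1 : Matrix (Fin m) (Fin m) 𝕜)) ⊗ₖ
              (1 : Matrix (Fin ε × Fin n) (Fin ε × Fin n) 𝕜))
            ((1 : Matrix (Fin η × Fin m) (Fin η × Fin m) 𝕜) ⊗ₖ
              (Ek 𝕜 ε ⊗ₖ (1 : Matrix (Fin n) (Fin n) 𝕜)))
            ((Fk 𝕜 η ⊗ₖ (1 : Matrix (Fin m) (Fin m) 𝕜)) ⊗ₖ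
              (1 : Matrix (Fin ε × Fin n) (Fin ε × Fin n) 𝕜))
            ((1 : Matrix (Fin η × Fin m) (Fin η × Fin m) 𝕜) ⊗ₖ
              (Fk 𝕜 ε ⊗ₖ (1 : Matrix (Fin n) (Fin n) 𝕜)))))))

/-- The 6×6 block matrix `ΔT` built from the blocks of the perturbation pencil. -/
def DeltaT (m n ℓ ε η : ℕ)
    (Δ12a Δ12b : Matrix (Fin (η+1) × Fin m) (Fin ℓ) 𝕜)
    (Δ13a Δ13b : Matrix (Fin (η+1) × Fin m) (Fin η × Fin m) 𝕜)
    (Δ21a Δ21b : Matrix (Fin ℓ) (Fin (ε+1) × Fin n) 𝕜)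
    (Δ22a Δ22b : Matrix (Fin ℓ) (Fin ℓ) 𝕜)
    (Δ23a Δ23b : Matrix (Fin ℓ) (Fin η × Fin m) 𝕜)
    (Δ31a Δ31b : Matrix (Fin ε × Fin n) (Fin (ε+1) × Fin n) 𝕜)
    (Δ32a Δ32b : Matrix (Fin ε × Fin n) (Fin ℓ) 𝕜) :
    Matrix (TRow m ℓ ε η n) (TCol m ℓ ε η n) 𝕜 :=
  Matrix.fromRows
    (Matrix.fromCols
      (Matrix.fromBlocks
        (Δ13aᵀ ⊗ₖ (1 : Matrix (Fin ℓ) (Fin ℓ) 𝕜))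
        ((1 : Matrix (Fin η × Fin m) (Fin η × Fin m) 𝕜) ⊗ₖ Δ22a)
        (Δ13bᵀ ⊗ₖ (1 : Matrix (Fin ℓ) (Fin ℓ) 𝕜))
        ((1 : Matrix (Fin η × Fin m) (Fin η × Fin m) 𝕜) ⊗ₖ Δ22b))
      (Matrix.fromCols 0
        (Matrix.fromBlocks 0 ((1 : Matrix (Fin η × Fin m) (Fin η × Fin m) 𝕜) ⊗ₖ Δ21a)
          0 ((1 : Matrix (Fin η × Fin m) (Fin η × Fin m) 𝕜) ⊗ₖ Δ21b))))
    (Matrix.fromRows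
      (Matrix.fromCols 0
        (Matrix.fromCols
          (Matrix.fromBlocks
            (Δ22aᵀ ⊗ₖ (1 : Matrix (Fin ε × Fin n) (Fin ε × Fin n) 𝕜))
            ((1 : Matrix (Fin ℓ) (Fin ℓ) 𝕜) ⊗ₖ Δ31a)
            (Δ22bᵀ ⊗ₖ (1 : Matrix (Fin ε × Fin n) (Fin ε × Fin n) 𝕜))
            ((1 : Matrix (Fin ℓ) (Fin ℓ) 𝕜) ⊗ₖ Δ31b))
          (Matrix.fromBlocks
            (Δ12aᵀ ⊗ₖ (1 : Matrix (Fin ε × Fin n) (Fin ε × Fin n) 𝕜)) 0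
            (Δ12bᵀ ⊗ₖ (1 : Matrix (Fin ε × Fin n) (Fin ε × Fin n) 𝕜)) 0)))
      (Matrix.fromCols
        (Matrix.fromBlocks 0 ((1 : Matrix (Fin η × Fin m) (Fin η × Fin m) 𝕜) ⊗ₖ Δ32a)
          0 ((1 : Matrix (Fin η × Fin m) (Fin η × Fin m) 𝕜) ⊗ₖ Δ32b))
        (Matrix.fromCols
          (Matrix.fromBlocks
            (Δ23aᵀ ⊗ₖ (1 : Matrix (Fin ε × Fin n) (Fin ε × Fin n) 𝕜)) 0
            (Δ23bᵀ ⊗ₖ (1 : Matrix (Fin ε × Fin n) (Fin ε × Fin n) 𝕜)) 0)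
          (Matrix.fromBlocks
            (Δ13aᵀ ⊗ₖ (1 : Matrix (Fin ε × Fin n) (Fin ε × Fin n) 𝕜))
            ((1 : Matrix (Fin η × Fin m) (Fin η × Fin m) 𝕜) ⊗ₖ Δ31a)
            (Δ13bᵀ ⊗ₖ (1 : Matrix (Fin ε × Fin n) (Fin ε × Fin n) 𝕜))
            ((1 : Matrix (Fin η × Fin m) (Fin η × Fin m) 𝕜) ⊗ₖ Δ31b)))))

/-- `(Λ_k(x) ⊗ I_m)` where `Λ_k(x) = (x^k, …, x, 1)ᵀ`. -/
def LamI (𝕜 : Type*) [RCLike 𝕜] (k m : ℕ) (x : 𝕜) :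
    Matrix (Fin (k+1) × Fin m) (Fin m) 𝕜 :=
  Matrix.of fun i j => if i.2 = j then x ^ (k - (i.1 : ℕ)) else 0

/-- `(A, B)` is controllable if the controllability matrix `[B, AB, …, A^{ℓ-1}B]`
has full rank `ℓ`. -/
def Controllable {ℓ n : ℕ} (A : Matrix (Fin ℓ) (Fin ℓ) 𝕜)
    (B : Matrix (Fin ℓ) (Fin n) 𝕜) : Prop :=
  (Matrix.of fun (i : Fin ℓ) (p : Fin ℓ × Fin n) => (A ^ (p.1 : ℕ) * B) i p.2).rank = ℓ

/-- `(A, C)` is observable if `(Aᵀ, Cᵀ)` is controllable. -/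
def Observable {ℓ m : ℕ} (A : Matrix (Fin ℓ) (Fin ℓ) 𝕜)
    (C : Matrix (Fin m) (Fin ℓ) 𝕜) : Prop :=
  Controllable Aᵀ Cᵀ

end

/-!
`S Sᵀ = 2 + P`, where `S` is the matrix of the theorem and `P` is the adjacency matrix of a graph on
two copies `u`, `v` of the grid `Fin η × Fin m × Fin ε × Fin n`: `u(i, j)` is joined to `v(i - 1, j)`
and `v(i, j - 1)` (the indices `m`, `n` are spectators). Its components are paths running along the
anti-diagonals, and the longest has `N - 1` vertices, with `N = 2 min(ε, η) + 1` if `ε ≠ η` and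
`N = 2η` if `ε = η`. The least eigenvalue of `S Sᵀ` is `2 - 2 cos (π / N)`: the path vectors
`p ↦ sin (p π / N)` are positive and satisfy `P w ≤ 2 cos (π / N) w`, which bounds the quadratic form
of `P` from below (Schur's test), and on the longest path the alternating vector `(-1)ᵖ sin (p π / N)`
is an eigenvector of `P` for `-2 cos (π / N)`. Hence `ω₃ = 2 sin (π / (2N))`, and concavity of `sin`
on `[0, π/4]` gives `ω₃ ≥ 2√2 / N ≥ 2√2 / (ε + η)`.
-/

open Real

theorem Fin.sum_ite_val_eq {M : Type*} [AddCommMonoid M] (K t : ℕ) (f : ℕ → M) :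
    ∑ j : Fin K, (if (j : ℕ) = t then f j else 0) = if t < K then f t else 0 := by
  rw [Fin.sum_univ_eq_sum_range (fun j => if j = t then f j else 0), Finset.sum_ite_eq']
  simp only [Finset.mem_range]

theorem neg_mul_le_weighted_sq_add {a b x y : ℝ} (ha : 0 < a) (hb : 0 < b) :
    -(x * y) ≤ (b / a * x ^ 2 + a / b * y ^ 2) / 2 := by
  have hsq : 0 ≤ (b * x + a * y) ^ 2 / (a * b) := div_nonneg (sq_nonneg _) (mul_pos ha hb).le
  have hexp : (b * x + a * y) ^ 2 / (a * b) = b / a * x ^ 2 + a / b * y ^ 2 + 2 * (x * y) := by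
    field_simp
    ring
  linarith

section Spectral
variable {ι : Type*} [Fintype ι]

theorem Matrix.dotProduct_self_pos {v : ι → ℝ} (hv : v ≠ 0) : 0 < v ⬝ᵥ v :=
  (Finset.sum_nonneg fun i _ => mul_self_nonneg (v i)).lt_of_ne
    (Ne.symm (dotProduct_self_eq_zero.not.mpr hv))

theorem Matrix.IsHermitian.iInf_eigenvalues_eq [DecidableEq ι] {A : Matrix ι ι ℝ}
    (hA : A.IsHermitian) {c : ℝ} (hle : ∀ x, c * (x ⬝ᵥ x) ≤ x ⬝ᵥ (A *ᵥ x)) {x : ι → ℝ}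
    (hx : x ≠ 0) (hAx : A *ᵥ x = c • x) :
    ⨅ i, hA.eigenvalues i = c := by
  have : Nonempty ι := by
    by_contra h
    exact hx (funext fun i => (h ⟨i⟩).elim)
  apply le_antisymm
  · have hc : c ∈ spectrum ℝ A := by
      rw [← Matrix.spectrum_toLin']
      exact (Module.End.hasEigenvalue_of_hasEigenvector
        ⟨Module.End.mem_eigenspace_iff.mpr (by simpa using hAx), hx⟩).mem_spectrum
    obtain ⟨i, rfl⟩ := hA.spectrum_real_eq_range_eigenvalues ▸ hc
    exact ciInf_le (Set.finite_range _).bddBelow i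
  · refine le_ciInf fun i => ?_
    have hv : ⇑(hA.eigenvectorBasis i) ≠ 0 := fun h =>
      hA.eigenvectorBasis.orthonormal.ne_zero i (by ext k; simpa using congrFun h k)
    have h := hle (hA.eigenvectorBasis i)
    rw [hA.mulVec_eigenvectorBasis, dotProduct_smul, smul_eq_mul] at h
    exact le_of_mul_le_mul_right h (dotProduct_self_pos hv)

/-- Schur's test. -/
theorem Matrix.neg_mul_dotProduct_self_le_dotProduct_mulVec {P : Matrix ι ι ℝ} (hPt : Pᵀ = P)
    (hP : ∀ i j, 0 ≤ P i j) {w : ι → ℝ} (hw : ∀ i, 0 < w i) {c : ℝ}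
    (hPw : ∀ i, (P *ᵥ w) i ≤ c * w i) (x : ι → ℝ) :
    -(c * (x ⬝ᵥ x)) ≤ x ⬝ᵥ (P *ᵥ x) := by
  set f : ι → ι → ℝ := fun i j => P i j * (w j / w i) * x i ^ 2 with hf
  have hterm : ∀ i j, -(f i j + f j i) / 2 ≤ x i * (P i j * x j) := by
    intro i j
    have hPji : P j i = P i j := congrFun (congrFun hPt i) j
    have := mul_le_mul_of_nonneg_left
      (neg_mul_le_weighted_sq_add (x := x i) (y := x j) (hw i) (hw j)) (hP i j)
    simp only [hf, hPji]
    linarith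
  have hrow : ∀ i, ∑ j, f i j ≤ c * x i ^ 2 := by
    intro i
    have hwi := hw i
    calc ∑ j, f i j = x i ^ 2 / w i * (P *ᵥ w) i := by
          simp only [hf, mulVec, dotProduct, Finset.mul_sum]
          exact Finset.sum_congr rfl fun j _ => by ring
      _ ≤ x i ^ 2 / w i * (c * w i) := by gcongr; exact hPw i
      _ = c * x i ^ 2 := by field_simp
  calc -(c * (x ⬝ᵥ x)) ≤ -∑ i, ∑ j, f i j := by
        simp only [dotProduct, Finset.mul_sum, ← sq]
        exact neg_le_neg (Finset.sum_le_sum fun i _ => hrow i)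
    _ = ∑ i, ∑ j, -(f i j + f j i) / 2 := by
        have hsymm : ∑ i, ∑ j, f j i = ∑ i, ∑ j, f i j := Finset.sum_comm
        simp only [neg_div, Finset.sum_neg_distrib, add_div, Finset.sum_add_distrib,
          ← Finset.sum_div, hsymm]
        ring
    _ ≤ x ⬝ᵥ (P *ᵥ x) := by
        simp only [dotProduct, mulVec, Finset.mul_sum]
        exact Finset.sum_le_sum fun i _ => Finset.sum_le_sum fun j _ => hterm i j

end Spectral

section Kronecker
variable {R ι ι' κ κ' : Type*} [CommSemiring R] [Fintype ι'] [Fintype κ']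

theorem kronecker_one_mulVec_apply [Fintype κ] [DecidableEq κ] (A : Matrix ι ι' R)
    (v : ι' × κ → R) (i : ι) (k : κ) :
    ((A ⊗ₖ (1 : Matrix κ κ R)) *ᵥ v) (i, k) = (A *ᵥ fun i' => v (i', k)) i := by
  simp [mulVec, dotProduct, Fintype.sum_prod_type, one_apply]

theorem one_kronecker_mulVec_apply [Fintype ι] [DecidableEq ι] (B : Matrix κ κ' R)
    (v : ι × κ' → R) (i : ι) (k : κ) :
    (((1 : Matrix ι ι R) ⊗ₖ B) *ᵥ v) (i, k) = (B *ᵥ fun k' => v (i, k')) k := by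
  simp [mulVec, dotProduct, Fintype.sum_prod_type, one_apply]

end Kronecker

def lowerShift (R : Type*) [Zero R] [One R] (k : ℕ) : Matrix (Fin k) (Fin k) R :=
  of fun i i' => if (i : ℕ) = i' + 1 then 1 else 0

section Shift
variable {R : Type*} [Semiring R] {k : ℕ}

theorem lowerShift_mulVec (f : ℕ → R) (i : Fin k) :
    (lowerShift R k *ᵥ fun i' => f i') i = if (i : ℕ) = 0 then 0 else f (i - 1) := by
  simp only [lowerShift, mulVec, dotProduct, of_apply, ite_mul, one_mul, zero_mul]
  split_ifs with hi
  · exact Finset.sum_eq_zero fun i' _ => if_neg (by omega)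
  · have hcond : ∀ i' : Fin k, ((i : ℕ) = i' + 1) ↔ ((i' : ℕ) = i - 1) := fun i' => by omega
    simp_rw [hcond]
    rw [Fin.sum_ite_val_eq, if_pos (by omega)]

theorem conjTranspose_lowerShift_mulVec [StarRing R] (f : ℕ → R) (i : Fin k) :
    ((lowerShift R k)ᴴ *ᵥ fun i' => f i') i = if (i : ℕ) + 1 < k then f (i + 1) else 0 := by
  simp only [lowerShift, mulVec, dotProduct, conjTranspose_apply, of_apply, apply_ite star,
    star_one, star_zero, ite_mul, one_mul, zero_mul]
  rw [Fin.sum_ite_val_eq _ _ f]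

variable (𝕜 : Type*) [RCLike 𝕜] (k)

theorem Ek_mul_conjTranspose_Ek : Ek 𝕜 k * (Ek 𝕜 k)ᴴ = 1 := by
  ext i i'
  simp only [Ek, mul_apply, of_apply, conjTranspose_apply, RCLike.star_def,
    MonoidWithZeroHom.map_ite_one_zero, mul_ite, mul_one, mul_zero]
  rw [Fin.sum_ite_val_eq _ _ (fun j => if j = (i : ℕ) then (1 : 𝕜) else 0)]
  simp [one_apply, Fin.ext_iff, eq_comm]

theorem Fk_mul_conjTranspose_Fk : Fk 𝕜 k * (Fk 𝕜 k)ᴴ = 1 := by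
  ext i i'
  simp only [Fk, mul_apply, of_apply, conjTranspose_apply, RCLike.star_def,
    MonoidWithZeroHom.map_ite_one_zero, mul_ite, mul_one, mul_zero]
  rw [Fin.sum_ite_val_eq _ _ (fun j => if j = (i : ℕ) + 1 then (1 : 𝕜) else 0)]
  simp [one_apply, Fin.ext_iff, eq_comm]

theorem Ek_mul_conjTranspose_Fk : Ek 𝕜 k * (Fk 𝕜 k)ᴴ = lowerShift 𝕜 k := by
  ext i i'
  simp only [Ek, Fk, lowerShift, mul_apply, of_apply, conjTranspose_apply, RCLike.star_def,
    MonoidWithZeroHom.map_ite_one_zero, mul_ite, mul_one, mul_zero]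
  rw [Fin.sum_ite_val_eq _ _ (fun j => if j = (i : ℕ) then (1 : 𝕜) else 0)]
  simp [eq_comm]

theorem Fk_mul_conjTranspose_Ek : Fk 𝕜 k * (Ek 𝕜 k)ᴴ = (lowerShift 𝕜 k)ᴴ := by
  rw [← Ek_mul_conjTranspose_Fk, conjTranspose_mul, conjTranspose_conjTranspose]

end Shift

abbrev Grid (η m ε n : ℕ) := Fin η × (Fin m × (Fin ε × Fin n))

noncomputable def kroneckerEF (η m ε n : ℕ) :
    Matrix (Grid η m ε n ⊕ Grid η m ε n)
      ((Fin (η+1) × (Fin m × (Fin ε × Fin n))) ⊕ (Fin η × (Fin m × (Fin (ε+1) × Fin n)))) ℝ :=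
  Matrix.fromBlocks
      (Ek ℝ η ⊗ₖ (1 : Matrix (Fin m × (Fin ε × Fin n)) (Fin m × (Fin ε × Fin n)) ℝ))
      ((1 : Matrix (Fin η) (Fin η) ℝ) ⊗ₖ ((1 : Matrix (Fin m) (Fin m) ℝ) ⊗ₖ
        (Ek ℝ ε ⊗ₖ (1 : Matrix (Fin n) (Fin n) ℝ))))
      (Fk ℝ η ⊗ₖ (1 : Matrix (Fin m × (Fin ε × Fin n)) (Fin m × (Fin ε × Fin n)) ℝ))
      ((1 : Matrix (Fin η) (Fin η) ℝ) ⊗ₖ ((1 : Matrix (Fin m) (Fin m) ℝ) ⊗ₖ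
        (Fk ℝ ε ⊗ₖ (1 : Matrix (Fin n) (Fin n) ℝ))))

noncomputable def gridShift (η m ε n : ℕ) : Matrix (Grid η m ε n) (Grid η m ε n) ℝ :=
  lowerShift ℝ η ⊗ₖ 1 + 1 ⊗ₖ (1 ⊗ₖ (lowerShift ℝ ε ⊗ₖ 1))

noncomputable def gridAdj (η m ε n : ℕ) :
    Matrix (Grid η m ε n ⊕ Grid η m ε n) (Grid η m ε n ⊕ Grid η m ε n) ℝ :=
  fromBlocks 0 (gridShift η m ε n) (gridShift η m ε n)ᴴ 0

theorem kroneckerEF_mul_conjTranspose (η m ε n : ℕ) :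
    kroneckerEF η m ε n * (kroneckerEF η m ε n)ᴴ = (2 : ℝ) • 1 + gridAdj η m ε n := by
  simp only [kroneckerEF, gridAdj, gridShift, fromBlocks_conjTranspose, fromBlocks_multiply,
    conjTranspose_kronecker, conjTranspose_one, ← mul_kronecker_mul, one_mul,
    Ek_mul_conjTranspose_Ek, Fk_mul_conjTranspose_Fk, Ek_mul_conjTranspose_Fk,
    Fk_mul_conjTranspose_Ek, one_kronecker_one, conjTranspose_add]
  rw [← fromBlocks_one, fromBlocks_smul, fromBlocks_add]
  simp [two_smul]

/-- Functions of `(i, j)` are indexed by `ℕ` so that neighbours can be written `g (i - 1) j`; only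
their values on `i < η`, `j < ε` matter. -/
def gridLift {η m ε n : ℕ} (g : ℕ → ℕ → ℝ) : Grid η m ε n → ℝ := fun r => g r.1 r.2.2.1

def downNbrSum (g : ℕ → ℕ → ℝ) (i j : ℕ) : ℝ :=
  (if i = 0 then 0 else g (i - 1) j) + (if j = 0 then 0 else g i (j - 1))

def upNbrSum (η ε : ℕ) (g : ℕ → ℕ → ℝ) (i j : ℕ) : ℝ :=
  (if i + 1 < η then g (i + 1) j else 0) + (if j + 1 < ε then g i (j + 1) else 0)

section gridAdj
variable {η m ε n : ℕ}

theorem gridShift_mulVec_gridLift (g : ℕ → ℕ → ℝ) :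
    gridShift η m ε n *ᵥ gridLift g = gridLift (downNbrSum g) := by
  funext ⟨i, a, j, b⟩
  simp only [gridShift, add_mulVec, Pi.add_apply, kronecker_one_mulVec_apply,
    one_kronecker_mulVec_apply, gridLift]
  rw [lowerShift_mulVec (fun x => g x j), lowerShift_mulVec (fun x => g i x)]
  rfl

theorem conjTranspose_gridShift_mulVec_gridLift (g : ℕ → ℕ → ℝ) :
    (gridShift η m ε n)ᴴ *ᵥ gridLift g = gridLift (upNbrSum η ε g) := by
  funext ⟨i, a, j, b⟩
  simp only [gridShift, conjTranspose_add, conjTranspose_kronecker, conjTranspose_one,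
    add_mulVec, Pi.add_apply, kronecker_one_mulVec_apply, one_kronecker_mulVec_apply, gridLift]
  rw [conjTranspose_lowerShift_mulVec (fun x => g x j),
    conjTranspose_lowerShift_mulVec (fun x => g i x)]
  rfl

theorem gridAdj_transpose : (gridAdj η m ε n)ᵀ = gridAdj η m ε n := by
  rw [gridAdj, fromBlocks_transpose, conjTranspose_eq_transpose_of_trivial, transpose_transpose,
    transpose_zero]

theorem gridAdj_nonneg (r r' : Grid η m ε n ⊕ Grid η m ε n) : 0 ≤ gridAdj η m ε n r r' := by
  rcases r with r | r <;> rcases r' with r' | r' <;>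
    simp only [gridAdj, gridShift, fromBlocks_apply₁₁, fromBlocks_apply₁₂, fromBlocks_apply₂₁,
      fromBlocks_apply₂₂, Matrix.zero_apply, conjTranspose_apply, star_trivial, Matrix.add_apply,
      kroneckerMap_apply, one_apply, lowerShift, of_apply, le_refl]
  all_goals positivity

theorem gridAdj_mulVec_sumElim (f g : ℕ → ℕ → ℝ) :
    gridAdj η m ε n *ᵥ Sum.elim (gridLift f) (gridLift g)
      = Sum.elim (gridLift (downNbrSum g)) (gridLift (upNbrSum η ε f)) := by
  rw [gridAdj, fromBlocks_mulVec, zero_mulVec, zero_mulVec, zero_add, add_zero, Sum.elim_comp_inl,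
    Sum.elim_comp_inr, gridShift_mulVec_gridLift, conjTranspose_gridShift_mulVec_gridLift]

end gridAdj

noncomputable def sinStep (N p : ℕ) : ℝ := sin (p * (π / N))

theorem sinStep_zero (N : ℕ) : sinStep N 0 = 0 := by simp [sinStep]

theorem sinStep_self {N : ℕ} (hN : N ≠ 0) : sinStep N N = 0 := by
  rw [sinStep, mul_div_cancel₀ _ (Nat.cast_ne_zero.mpr hN), sin_pi]

theorem sinStep_pos {N p : ℕ} (hp : 0 < p) (hpN : p < N) : 0 < sinStep N p := by
  have hN : (0 : ℝ) < N := by exact_mod_cast hp.trans hpN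
  apply sin_pos_of_pos_of_lt_pi (by positivity)
  rw [← lt_div_iff₀ (by positivity), div_div_cancel₀ pi_ne_zero]
  exact_mod_cast hpN

theorem sinStep_nonneg {N p : ℕ} (hpN : p ≤ N) : 0 ≤ sinStep N p := by
  rcases Nat.eq_zero_or_pos p with rfl | hp
  · rw [sinStep_zero]
  rcases hpN.lt_or_eq with hlt | rfl
  · exact (sinStep_pos hp hlt).le
  · rw [sinStep_self hp.ne']

theorem sinStep_pred_add_sinStep_succ (N : ℕ) {p : ℕ} (hp : 1 ≤ p) :
    sinStep N (p - 1) + sinStep N (p + 1) = 2 * cos (π / N) * sinStep N p := by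
  simp only [sinStep]
  push_cast [Nat.cast_sub hp]
  rw [sub_mul, add_mul, one_mul, sin_sub, sin_add]
  ring

/-- The position, counted from `1`, of `u(i, j)` and `v(i, j)` on their anti-diagonal path
`…, u(i, j), v(i, j - 1), u(i + 1, j - 1), …`, which starts at `i = 0` or at `j = ε - 1`. -/
def uPos (ε i j : ℕ) : ℕ := min (2 * i + 1) (2 * (ε - j))

def vPos (ε i j : ℕ) : ℕ := min (2 * i + 2) (2 * (ε - j) - 1)

noncomputable def uWeight (ε N i j : ℕ) : ℝ := sinStep N (uPos ε i j)

noncomputable def vWeight (ε N i j : ℕ) : ℝ := sinStep N (vPos ε i j)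

section weights
variable {ε N i j : ℕ}

/-- Here and in `upNbrSum_uWeight_add`, the extra term is the neighbour missing at the end of a
path. -/
theorem downNbrSum_vWeight_add (hj : j < ε) :
    downNbrSum (vWeight ε N) i j + (if j = 0 then sinStep N (uPos ε i j + 1) else 0)
      = 2 * cos (π / N) * uWeight ε N i j := by
  have hleft : (if i = 0 then 0 else vWeight ε N (i - 1) j) = sinStep N (uPos ε i j - 1) := by
    split_ifs with hi
    · rw [show uPos ε i j - 1 = 0 by unfold uPos; omega, sinStep_zero]
    · rw [vWeight, show vPos ε (i - 1) j = uPos ε i j - 1 by unfold vPos uPos; omega]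
  have hright : (if j = 0 then 0 else vWeight ε N i (j - 1))
      + (if j = 0 then sinStep N (uPos ε i j + 1) else 0) = sinStep N (uPos ε i j + 1) := by
    split_ifs with hj0
    · rw [zero_add]
    · rw [add_zero, vWeight, show vPos ε i (j - 1) = uPos ε i j + 1 by unfold vPos uPos; omega]
  rw [downNbrSum, add_assoc, hleft, hright, uWeight,
    sinStep_pred_add_sinStep_succ N (by unfold uPos; omega)]

theorem upNbrSum_uWeight_add {η : ℕ} (hi : i < η) (hj : j < ε) :
    upNbrSum η ε (uWeight ε N) i j + (if i + 1 = η then sinStep N (vPos ε i j + 1) else 0)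
      = 2 * cos (π / N) * vWeight ε N i j := by
  have hleft : (if i + 1 < η then uWeight ε N (i + 1) j else 0)
      + (if i + 1 = η then sinStep N (vPos ε i j + 1) else 0) = sinStep N (vPos ε i j + 1) := by
    split_ifs with h h' <;> try omega
    · rw [add_zero, uWeight, show uPos ε (i + 1) j = vPos ε i j + 1 by unfold uPos vPos; omega]
    · rw [zero_add]
  have hright : (if j + 1 < ε then uWeight ε N i (j + 1) else 0) = sinStep N (vPos ε i j - 1) := by
    split_ifs with h
    · rw [uWeight, show uPos ε i (j + 1) = vPos ε i j - 1 by unfold uPos vPos; omega]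
    · rw [show vPos ε i j - 1 = 0 by unfold vPos; omega, sinStep_zero]
  rw [upNbrSum, add_right_comm, hleft, hright, add_comm, vWeight,
    sinStep_pred_add_sinStep_succ N (by unfold vPos; omega)]

end weights

/-- One more than the number of vertices of the longest anti-diagonal path. -/
def pathBound (ε η : ℕ) : ℕ := if ε = η then 2 * η else 2 * min ε η + 1

section pathBound
variable {ε η i j : ℕ}

theorem two_le_pathBound (hη : 0 < η) (hε : 0 < ε) : 2 ≤ pathBound ε η := by
  unfold pathBound; split_ifs <;> omega

theorem pathBound_le (ε η : ℕ) : pathBound ε η ≤ ε + η := by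
  unfold pathBound; split_ifs <;> omega

theorem uPos_lt_pathBound (hi : i < η) (hj : j < ε) : uPos ε i j < pathBound ε η := by
  unfold uPos pathBound; split_ifs <;> omega

theorem vPos_lt_pathBound (hi : i < η) (hj : j < ε) : vPos ε i j < pathBound ε η := by
  unfold vPos pathBound; split_ifs <;> omega

theorem uWeight_pos (hi : i < η) (hj : j < ε) : 0 < uWeight ε (pathBound ε η) i j :=
  sinStep_pos (by unfold uPos; omega) (uPos_lt_pathBound hi hj)

theorem vWeight_pos (hi : i < η) (hj : j < ε) : 0 < vWeight ε (pathBound ε η) i j :=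
  sinStep_pos (by unfold vPos; omega) (vPos_lt_pathBound hi hj)

theorem downNbrSum_vWeight_le (hi : i < η) (hj : j < ε) :
    downNbrSum (vWeight ε (pathBound ε η)) i j
      ≤ 2 * cos (π / pathBound ε η) * uWeight ε (pathBound ε η) i j := by
  rw [← downNbrSum_vWeight_add hj, le_add_iff_nonneg_right]
  split_ifs
  · exact sinStep_nonneg (uPos_lt_pathBound hi hj)
  · exact le_rfl

theorem upNbrSum_uWeight_le (hi : i < η) (hj : j < ε) :
    upNbrSum η ε (uWeight ε (pathBound ε η)) i j
      ≤ 2 * cos (π / pathBound ε η) * vWeight ε (pathBound ε η) i j := by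
  rw [← upNbrSum_uWeight_add hi hj, le_add_iff_nonneg_right]
  split_ifs
  · exact sinStep_nonneg (vPos_lt_pathBound hi hj)
  · exact le_rfl

theorem downNbrSum_vWeight_eq (hi : i < η) (hj : j < ε) (hij : i + j = min ε η) :
    downNbrSum (vWeight ε (pathBound ε η)) i j
      = 2 * cos (π / pathBound ε η) * uWeight ε (pathBound ε η) i j := by
  rw [← downNbrSum_vWeight_add hj, left_eq_add]
  split_ifs with hj0
  · rw [show uPos ε i j + 1 = pathBound ε η by unfold uPos pathBound; split_ifs <;> omega,
      sinStep_self (by unfold pathBound; split_ifs <;> omega)]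
  · rfl

theorem upNbrSum_uWeight_eq (hi : i < η) (hj : j < ε) (hij : i + j + 1 = min ε η) :
    upNbrSum η ε (uWeight ε (pathBound ε η)) i j
      = 2 * cos (π / pathBound ε η) * vWeight ε (pathBound ε η) i j := by
  rw [← upNbrSum_uWeight_add hi hj, left_eq_add]
  split_ifs with hi1
  · rw [show vPos ε i j + 1 = pathBound ε η by unfold vPos pathBound; split_ifs <;> omega,
      sinStep_self (by unfold pathBound; split_ifs <;> omega)]
  · rfl

end pathBound

/-- Together with `vMode`: the weights on the longest path `i + j = min ε η`, with the sign of `v`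
flipped so that the vector alternates along the path. -/
noncomputable def uMode (ε η i j : ℕ) : ℝ :=
  if i + j = min ε η then uWeight ε (pathBound ε η) i j else 0

noncomputable def vMode (ε η i j : ℕ) : ℝ :=
  if i + j + 1 = min ε η then -vWeight ε (pathBound ε η) i j else 0

section modes
variable {ε η i j : ℕ}

theorem downNbrSum_vMode (hi : i < η) (hj : j < ε) :
    downNbrSum (vMode ε η) i j = -(2 * cos (π / pathBound ε η)) * uMode ε η i j := by
  rw [uMode]
  split_ifs with hij
  · rw [neg_mul, ← downNbrSum_vWeight_eq hi hj hij, downNbrSum, downNbrSum, vMode, vMode]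
    split_ifs <;> first | omega | ring
  · rw [downNbrSum, vMode, vMode]
    split_ifs <;> first | omega | ring

theorem upNbrSum_uMode (hi : i < η) (hj : j < ε) :
    upNbrSum η ε (uMode ε η) i j = -(2 * cos (π / pathBound ε η)) * vMode ε η i j := by
  rw [vMode]
  split_ifs with hij
  · rw [neg_mul_neg, ← upNbrSum_uWeight_eq hi hj hij, upNbrSum, upNbrSum, uMode, uMode]
    split_ifs <;> first | omega | ring
  · rw [upNbrSum, uMode, uMode]
    split_ifs <;> first | omega | ring

theorem vMode_ne_zero (hη : 0 < η) (hε : 0 < ε) : vMode ε η 0 (min ε η - 1) ≠ 0 := by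
  rw [vMode, if_pos (by omega), neg_ne_zero]
  exact (vWeight_pos hη (by omega)).ne'

end modes

noncomputable def gridWeight (η m ε n : ℕ) : Grid η m ε n ⊕ Grid η m ε n → ℝ :=
  Sum.elim (gridLift (uWeight ε (pathBound ε η))) (gridLift (vWeight ε (pathBound ε η)))

noncomputable def gridMode (η m ε n : ℕ) : Grid η m ε n ⊕ Grid η m ε n → ℝ :=
  Sum.elim (gridLift (uMode ε η)) (gridLift (vMode ε η))

section Spectrum
variable {η m ε n : ℕ}

theorem neg_le_dotProduct_gridAdj_mulVec (x : Grid η m ε n ⊕ Grid η m ε n → ℝ) :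
    -(2 * cos (π / pathBound ε η) * (x ⬝ᵥ x)) ≤ x ⬝ᵥ (gridAdj η m ε n *ᵥ x) := by
  refine neg_mul_dotProduct_self_le_dotProduct_mulVec gridAdj_transpose gridAdj_nonneg
    (w := gridWeight η m ε n) ?_ ?_ x
  · rintro (⟨i, a, j, b⟩ | ⟨i, a, j, b⟩)
    exacts [uWeight_pos i.isLt j.isLt, vWeight_pos i.isLt j.isLt]
  · rw [gridWeight, gridAdj_mulVec_sumElim]
    rintro (⟨i, a, j, b⟩ | ⟨i, a, j, b⟩)
    exacts [downNbrSum_vWeight_le i.isLt j.isLt, upNbrSum_uWeight_le i.isLt j.isLt]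

theorem gridAdj_mulVec_gridMode :
    gridAdj η m ε n *ᵥ gridMode η m ε n = -(2 * cos (π / pathBound ε η)) • gridMode η m ε n := by
  rw [gridMode, gridAdj_mulVec_sumElim]
  funext r
  rcases r with ⟨i, a, j, b⟩ | ⟨i, a, j, b⟩
  exacts [downNbrSum_vMode i.isLt j.isLt, upNbrSum_uMode i.isLt j.isLt]

theorem gridMode_ne_zero (hη : 0 < η) (hm : 0 < m) (hε : 0 < ε) (hn : 0 < n) :
    gridMode η m ε n ≠ 0 := fun h =>
  vMode_ne_zero hη hε
    (congrFun h (Sum.inr (⟨0, hη⟩, ⟨0, hm⟩, ⟨min ε η - 1, by omega⟩, ⟨0, hn⟩)))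

theorem iInf_eigenvalues_kroneckerEF (hη : 0 < η) (hm : 0 < m) (hε : 0 < ε) (hn : 0 < n) :
    ⨅ i, (isHermitian_mul_conjTranspose_self (kroneckerEF η m ε n)).eigenvalues i
      = 2 - 2 * cos (π / pathBound ε η) := by
  refine IsHermitian.iInf_eigenvalues_eq _ (fun x => ?_) (gridMode_ne_zero hη hm hε hn) ?_
  · rw [kroneckerEF_mul_conjTranspose, add_mulVec, smul_mulVec, one_mulVec, dotProduct_add,
      dotProduct_smul, smul_eq_mul]
    linarith [neg_le_dotProduct_gridAdj_mulVec x]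
  · rw [kroneckerEF_mul_conjTranspose, add_mulVec, smul_mulVec, one_mulVec,
      gridAdj_mulVec_gridMode, ← add_smul]
    ring_nf

end Spectrum

theorem mul_sqrt_two_div_two_le_sin {t : ℝ} (ht0 : 0 ≤ t) (ht1 : t ≤ 1) :
    t * (√2 / 2) ≤ sin (π / 4 * t) := by
  simpa [mul_comm t] using
    strictConcaveOn_sin_Icc.concaveOn.2 (x := 0) (y := π / 4) ⟨le_rfl, pi_pos.le⟩
      ⟨by positivity, by linarith [pi_pos]⟩ (sub_nonneg.2 ht1) ht0

theorem sqrt_two_sub_two_mul_cos {x : ℝ} (h0 : 0 ≤ x) (h1 : x ≤ 2 * π) :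
    √(2 - 2 * cos x) = 2 * sin (x / 2) := by
  have hsin : 0 ≤ sin (x / 2) := sin_nonneg_of_nonneg_of_le_pi (by linarith) (by linarith)
  have hsq : 2 - 2 * cos x = (2 * sin (x / 2)) ^ 2 := by
    rw [mul_pow, sin_sq, cos_sq, show 2 * (x / 2) = x by ring]
    ring
  rw [hsq, sqrt_sq (by positivity)]

theorem two_mul_sqrt_two_div_le_two_mul_sin {N : ℕ} (hN : 2 ≤ N) :
    2 * √2 / N ≤ 2 * sin (π / (2 * N)) := by
  have hNpos : (0 : ℝ) < N := by positivity
  calc 2 * √2 / N = 2 * ((2 / N) * (√2 / 2)) := by field_simp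
    _ ≤ 2 * sin (π / 4 * (2 / N)) := by
        gcongr
        refine mul_sqrt_two_div_two_le_sin (by positivity) ?_
        rw [div_le_one hNpos]
        exact_mod_cast hN
    _ = 2 * sin (π / (2 * N)) := by
        congr 2
        field_simp
        ring

/-- Lemma 3.3. The smallest singular value `ω₃` of the block matrix
`[[E_η⊗I_{mεn}, I_{ηm}⊗E_ε⊗I_n], [F_η⊗I_{mεn}, I_{ηm}⊗F_ε⊗I_n]]` satisfies
`ω₃ ≥ 2√2/(ε+η)`, and in fact equals the stated sine expressions. -/
theorem statement2 (η m ε n : ℕ) (hη : 0 < η) (hm : 0 < m) (hε : 0 < ε) (hn : 0 < n) :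
    let ω₃ := sigmaMin (Matrix.fromBlocks
      (Ek ℝ η ⊗ₖ (1 : Matrix (Fin m × (Fin ε × Fin n)) (Fin m × (Fin ε × Fin n)) ℝ))
      ((1 : Matrix (Fin η) (Fin η) ℝ) ⊗ₖ ((1 : Matrix (Fin m) (Fin m) ℝ) ⊗ₖ
        (Ek ℝ ε ⊗ₖ (1 : Matrix (Fin n) (Fin n) ℝ))))
      (Fk ℝ η ⊗ₖ (1 : Matrix (Fin m × (Fin ε × Fin n)) (Fin m × (Fin ε × Fin n)) ℝ))
      ((1 : Matrix (Fin η) (Fin η) ℝ) ⊗ₖ ((1 : Matrix (Fin m) (Fin m) ℝ) ⊗ₖ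
        (Fk ℝ ε ⊗ₖ (1 : Matrix (Fin n) (Fin n) ℝ)))));
    2 * Real.sqrt 2 / ((ε : ℝ) + (η : ℝ)) ≤ ω₃ ∧
    (ε ≠ η → ω₃ = 2 * Real.sin (Real.pi / (4 * (min ε η : ℝ) + 2))) ∧
    (ε = η → ω₃ = 2 * Real.sin (Real.pi / (4 * (η : ℝ)))) := by
  intro ω₃
  have hN := two_le_pathBound hη hε
  have hω : ω₃ = 2 * sin (π / (2 * pathBound ε η)) := by
    have hπN : π / pathBound ε η ≤ 2 * π :=
      (div_le_self pi_pos.le (by exact_mod_cast hN.trans' one_le_two)).trans (by linarith [pi_pos])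
    change sigmaMin (kroneckerEF η m ε n) = _
    rw [sigmaMin, iInf_eigenvalues_kroneckerEF hη hm hε hn,
      sqrt_two_sub_two_mul_cos (by positivity) hπN, div_div, mul_comm (pathBound ε η : ℝ)]
  refine ⟨?_, fun h => ?_, fun h => ?_⟩
  · rw [hω]
    refine le_trans ?_ (two_mul_sqrt_two_div_le_two_mul_sin hN)
    gcongr
    exact_mod_cast pathBound_le ε η
  · rw [hω, pathBound, if_neg h]
    push_cast
    ring_nf
  · rw [hω, pathBound, if_pos h]
    push_cast
    ring_nf
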